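/- arXiv:1505.06429 — 6 statements merged into one kernel-verified Lean document; each statement's English description precedes it below -/
import Mathlib

section
/- There exists a constant C > 0 such that for every integer n ≥ 2, ϑ·(1 − (2/3)·2^{−n} − C·3^{−n}) ≤ ϑ_n ≤ ϑ·(1 − (2/3)·2^{−n} + C·3^{−n}); in other words, ϑ_n = ϑ·(1 − (2/3)·2^{−n} + O(3^{−n})) as n → ∞. -/
/-!
At each prime `p` the Euler factor of `ϑ_n` is that of `ϑ` times `1 - x_p`, where
`x_p = 1 / (p^(n-1) (p² - p + 1))`, so `ϑ_n = ϑ ∏_p (1 - x_p)`. As all `x_p ∈ [0, 1]`, this product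
lies between `1 - ∑_p x_p` (Weierstrass' product inequality) and its factor `1 - x_2 = 1 - (2/3) 2^(-n)`.
Since `p² - p + 1 ≥ 3p²/4`, the odd primes contribute at most `4 · 3^(-n) ∑_p p^(-2) ≤ 7 · 3^(-n)`
to `∑_p x_p`, using `∑_p p^(-2) ≤ ζ(2) = π²/6`.
-/

/-- `ϑ_n`: the product over all primes `p` of `1 + (p^(n-1) - 1)/(p^(n+1) - p^n)`. -/
noncomputable def thetaN (n : ℕ) : ℝ :=
  ∏' p : Nat.Primes, (1 + ((p : ℝ) ^ (n - 1) - 1) / ((p : ℝ) ^ (n + 1) - (p : ℝ) ^ n))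

/-- `ϑ`: the product over all primes `p` of `1 + 1/(p² - p)`. -/
noncomputable def theta : ℝ :=
  ∏' p : Nat.Primes, (1 + 1 / ((p : ℝ) ^ 2 - p))

open Filter

section OneSubProduct

variable {ι : Type*} {f : ι → ℝ}

theorem Finset.one_sub_sum_le_prod_one_sub (s : Finset ι) (h0 : ∀ i ∈ s, 0 ≤ f i)
    (h1 : ∀ i ∈ s, f i ≤ 1) : 1 - ∑ i ∈ s, f i ≤ ∏ i ∈ s, (1 - f i) := by
  induction s using Finset.cons_induction with
  | empty => simp
  | cons a s ha ih =>
    rw [Finset.prod_cons, Finset.sum_cons]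
    simp only [Finset.mem_cons, forall_eq_or_imp] at h0 h1
    have hs : 0 ≤ ∑ i ∈ s, f i := Finset.sum_nonneg h0.2
    nlinarith [mul_le_mul_of_nonneg_left (ih h0.2 h1.2) (sub_nonneg.2 h1.1), mul_nonneg h0.1 hs]

theorem Real.multipliable_one_sub_of_summable (hf : Summable f) :
    Multipliable (fun i => 1 - f i) := by
  simpa only [sub_eq_add_neg] using Real.multipliable_one_add_of_summable hf.neg

theorem one_sub_tsum_le_tprod_one_sub (hf : Summable f) (h0 : ∀ i, 0 ≤ f i)
    (h1 : ∀ i, f i ≤ 1) : 1 - ∑' i, f i ≤ ∏' i, (1 - f i) := by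
  refine ge_of_tendsto' (Real.multipliable_one_sub_of_summable hf).hasProd fun s => ?_
  calc 1 - ∑' i, f i ≤ 1 - ∑ i ∈ s, f i := by linarith [hf.sum_le_tsum s fun i _ => h0 i]
    _ ≤ ∏ i ∈ s, (1 - f i) := s.one_sub_sum_le_prod_one_sub (fun i _ => h0 i) fun i _ => h1 i

theorem tprod_one_sub_le_one_sub (hf : Summable f) (h0 : ∀ i, 0 ≤ f i)
    (h1 : ∀ i, f i ≤ 1) (j : ι) : ∏' i, (1 - f i) ≤ 1 - f j := by
  classical
  refine le_of_tendsto (Real.multipliable_one_sub_of_summable hf).hasProd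
    (eventually_atTop.2 ⟨{j}, fun s hs => ?_⟩)
  rw [← Finset.mul_prod_erase s _ (hs (Finset.mem_singleton_self j))]
  exact mul_le_of_le_one_right (sub_nonneg.2 (h1 j))
    (Finset.prod_le_one (fun i _ => sub_nonneg.2 (h1 i)) fun i _ => sub_le_self _ (h0 i))

end OneSubProduct

/-- The Euler factor of `ϑ_n` at `p` is that of `ϑ` times `1 - thetaNDefect n p`. -/
noncomputable def thetaNDefect (n : ℕ) (p : ℝ) : ℝ :=
  1 / (p ^ (n - 1) * (p ^ 2 - p + 1))

section Defect

variable {n : ℕ} {p : ℝ}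

lemma thetaNDefect_nonneg (hp : 0 ≤ p) : 0 ≤ thetaNDefect n p := by
  have : 0 < p ^ 2 - p + 1 := by nlinarith [sq_nonneg (p - 1)]
  unfold thetaNDefect
  positivity

lemma thetaNDefect_le_one (hp : 1 ≤ p) : thetaNDefect n p ≤ 1 := by
  have h : 1 ≤ p ^ (n - 1) * (p ^ 2 - p + 1) :=
    one_le_mul_of_one_le_of_one_le (one_le_pow₀ hp) (by nlinarith)
  exact div_le_one_of_le₀ h (zero_le_one.trans h)

lemma thetaNDefect_le (hn : 1 ≤ n) {q : ℝ} (hq : 0 < q) (hqp : q ≤ p) :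
    thetaNDefect n p ≤ 4 * q / 3 / q ^ n * (p ^ 2)⁻¹ := by
  obtain ⟨k, rfl⟩ : ∃ k, n = k + 1 := ⟨n - 1, by omega⟩
  have hp : 0 < p := hq.trans_le hqp
  have hpow : q ^ k ≤ p ^ k := pow_le_pow_left₀ hq.le hqp k
  have hquad : 3 / 4 * p ^ 2 ≤ p ^ 2 - p + 1 := by nlinarith [sq_nonneg (p - 2)]
  calc thetaNDefect (k + 1) p ≤ 1 / (q ^ k * (3 / 4 * p ^ 2)) := by
        unfold thetaNDefect
        rw [Nat.add_sub_cancel]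
        gcongr
    _ = 4 * q / 3 / q ^ (k + 1) * (p ^ 2)⁻¹ := by
        field_simp
        ring

lemma thetaNDefect_two (hn : 1 ≤ n) : thetaNDefect n 2 = 2 / 3 / 2 ^ n := by
  obtain ⟨k, rfl⟩ : ∃ k, n = k + 1 := ⟨n - 1, by omega⟩
  unfold thetaNDefect
  rw [Nat.add_sub_cancel]
  field_simp
  ring

lemma one_add_div_eq_mul_one_sub_thetaNDefect (hn : 1 ≤ n) (hp : 1 < p) :
    1 + (p ^ (n - 1) - 1) / (p ^ (n + 1) - p ^ n) =
      (1 + 1 / (p ^ 2 - p)) * (1 - thetaNDefect n p) := by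
  obtain ⟨k, rfl⟩ : ∃ k, n = k + 1 := ⟨n - 1, by omega⟩
  have hpk : 0 < p ^ k := by positivity
  have hp2 : 0 < p ^ 2 - p := by nlinarith
  have hp3 : 0 < p ^ 2 - p + 1 := by linarith
  unfold thetaNDefect
  rw [Nat.add_sub_cancel, show p ^ (k + 1 + 1) - p ^ (k + 1) = p ^ k * (p ^ 2 - p) by ring,
    one_add_div (by positivity), one_add_div hp2.ne', one_sub_div (by positivity),
    div_mul_div_comm, div_eq_div_iff (by positivity) (by positivity)]
  ring

end Defect

namespace Nat.Primes

lemma summable_inv_sq : Summable (fun p : Nat.Primes => ((p : ℝ) ^ 2)⁻¹) :=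
  (Real.summable_nat_pow_inv.mpr one_lt_two).comp_injective Subtype.coe_injective

lemma tsum_inv_sq_le : ∑' p : Nat.Primes, ((p : ℝ) ^ 2)⁻¹ ≤ 7 / 4 :=
  calc ∑' p : Nat.Primes, ((p : ℝ) ^ 2)⁻¹ ≤ ∑' k : ℕ, ((k : ℝ) ^ 2)⁻¹ :=
        tsum_comp_le_tsum_of_inj (Real.summable_nat_pow_inv.mpr one_lt_two)
          (fun k => by positivity) Subtype.coe_injective
    _ = Real.pi ^ 2 / 6 := by simpa only [one_div] using hasSum_zeta_two.tsum_eq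
    _ ≤ 7 / 4 := by nlinarith [Real.pi_pos, Real.pi_lt_d2]

lemma summable_one_div_sq_sub_self :
    Summable (fun p : Nat.Primes => 1 / ((p : ℝ) ^ 2 - p)) := by
  refine (summable_inv_sq.mul_left 2).of_nonneg_of_le (fun p => ?_) fun p => ?_
  all_goals have hp : (2 : ℝ) ≤ p := by exact_mod_cast p.2.two_le
  · exact one_div_nonneg.2 (by nlinarith)
  · rw [one_div, ← div_eq_mul_inv, inv_le_comm₀ (by nlinarith) (by positivity), inv_div,
      div_le_iff₀ (by positivity)]
    nlinarith

end Nat.Primes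

section Primes

variable {n : ℕ}

lemma summable_thetaNDefect (hn : 1 ≤ n) :
    Summable (fun p : Nat.Primes => thetaNDefect n p) :=
  Nat.Primes.summable_inv_sq.mul_left _ |>.of_nonneg_of_le
    (fun p => thetaNDefect_nonneg p.1.cast_nonneg)
    fun p => thetaNDefect_le hn two_pos (by exact_mod_cast p.2.two_le)

lemma tsum_thetaNDefect_le (hn : 1 ≤ n) :
    ∑' p : Nat.Primes, thetaNDefect n p ≤ 2 / 3 / 2 ^ n + 7 / 3 ^ n := by
  classical
  let two : Nat.Primes := ⟨2, Nat.prime_two⟩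
  have hodd (p : Nat.Primes) :
      (if p = two then 0 else thetaNDefect n p) ≤ 4 / 3 ^ n * ((p : ℝ) ^ 2)⁻¹ := by
    split_ifs with hp
    · positivity
    · have h3 : (3 : ℝ) ≤ p := by
        have : (p : ℕ) ≠ 2 := fun h => hp (Subtype.ext h)
        exact_mod_cast (p.2.two_le.lt_of_ne' this)
      simpa using thetaNDefect_le hn three_pos h3
  have hodd_nonneg (p : Nat.Primes) : 0 ≤ if p = two then 0 else thetaNDefect n p := by
    split_ifs
    exacts [le_rfl, thetaNDefect_nonneg p.1.cast_nonneg]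
  have hsum_inv := Nat.Primes.summable_inv_sq.mul_left (4 / 3 ^ n)
  calc ∑' p : Nat.Primes, thetaNDefect n p
      = thetaNDefect n 2 + ∑' p : Nat.Primes, if p = two then 0 else thetaNDefect n p :=
        (summable_thetaNDefect hn).tsum_eq_add_tsum_ite two
    _ ≤ 2 / 3 / 2 ^ n + 4 / 3 ^ n * ∑' p : Nat.Primes, ((p : ℝ) ^ 2)⁻¹ := by
        rw [thetaNDefect_two hn, ← tsum_mul_left]
        exact add_le_add_right
          ((hsum_inv.of_nonneg_of_le hodd_nonneg hodd).tsum_le_tsum hodd hsum_inv) _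
    _ ≤ 2 / 3 / 2 ^ n + 7 / 3 ^ n := by
        have := mul_le_mul_of_nonneg_left Nat.Primes.tsum_inv_sq_le
          (show (0 : ℝ) ≤ 4 / 3 ^ n by positivity)
        linarith [show 4 / 3 ^ n * (7 / 4 : ℝ) = 7 / 3 ^ n by ring]

lemma thetaN_eq_theta_mul_tprod (hn : 1 ≤ n) :
    thetaN n = theta * ∏' p : Nat.Primes, (1 - thetaNDefect n p) := by
  rw [thetaN, theta, ← Multipliable.tprod_mul
    (Real.multipliable_one_add_of_summable Nat.Primes.summable_one_div_sq_sub_self)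
    (Real.multipliable_one_sub_of_summable (summable_thetaNDefect hn))]
  exact tprod_congr fun p =>
    one_add_div_eq_mul_one_sub_thetaNDefect hn (by exact_mod_cast p.2.one_lt)

lemma theta_nonneg : 0 ≤ theta :=
  tprod_nonneg fun p => by
    have : (1 : ℝ) < p := by exact_mod_cast p.2.one_lt
    have : (0 : ℝ) < (p : ℝ) ^ 2 - p := by nlinarith
    positivity

end Primes

theorem thetaN_asymptotic :
    ∃ C > 0, ∀ n : ℕ, 2 ≤ n →
      theta * (1 - (2 / 3) / 2 ^ n - C / 3 ^ n) ≤ thetaN n ∧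
        thetaN n ≤ theta * (1 - (2 / 3) / 2 ^ n + C / 3 ^ n) := by
  refine ⟨7, by norm_num, fun n hn => ?_⟩
  have hn1 : 1 ≤ n := by omega
  have hsum := summable_thetaNDefect hn1
  have h0 (p : Nat.Primes) : 0 ≤ thetaNDefect n p := thetaNDefect_nonneg p.1.cast_nonneg
  have h1 (p : Nat.Primes) : thetaNDefect n p ≤ 1 :=
    thetaNDefect_le_one (by exact_mod_cast p.2.one_le)
  rw [thetaN_eq_theta_mul_tprod hn1]
  constructor
  · refine mul_le_mul_of_nonneg_left ?_ theta_nonneg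
    calc _ ≤ 1 - ∑' p : Nat.Primes, thetaNDefect n p := by linarith [tsum_thetaNDefect_le hn1]
      _ ≤ _ := one_sub_tsum_le_tprod_one_sub hsum h0 h1
  · refine mul_le_mul_of_nonneg_left ?_ theta_nonneg
    calc _ ≤ 1 - thetaNDefect n 2 := tprod_one_sub_le_one_sub hsum h0 h1 ⟨2, Nat.prime_two⟩
      _ ≤ _ := by rw [thetaNDefect_two hn1]; linarith [show (0 : ℝ) ≤ 7 / 3 ^ n by positivity]
end

section
/- For every integer n ≥ 2 one has ϑ/ζ(n) ≤ ϑ_n ≤ ϑ/ζ(n+1), where ζ is the Riemann zeta function. (Equivalently, since ϑ_n/ϑ = ∏_p (1 − 1/(p^{n−1}(p² − p + 1))) and p ≤ p² − p + 1 ≤ p² for every prime p, each factor lies between 1 − p^{−n} and 1 − p^{−(n+1)}.) -/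
/-- The Riemann zeta function at a natural number `k`, as the real series `∑ m ≥ 1, m⁻ᵏ`. -/
noncomputable def zetaNat (k : ℕ) : ℝ :=
  ∑' m : ℕ, 1 / (m + 1 : ℝ) ^ k

/-!
Each factor of `ϑ_n` splits as `(1 + 1/(p² - p)) · (1 - 1/(p^(n-1) (p² - p + 1)))`, so `ϑ_n` is `ϑ`
times the product of the second factors. Since `p ≤ p² - p + 1 ≤ p²`, that product is squeezed
between the Euler products `∏_p (1 - p^(-n)) = 1/ζ(n)` and `∏_p (1 - p^(-(n+1))) = 1/ζ(n+1)`.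
-/

theorem hasProd_le_of_nonneg {ι α : Type*} [CommSemiring α] [PartialOrder α] [IsOrderedRing α]
    [TopologicalSpace α] [OrderClosedTopology α] {f g : ι → α} {a₁ a₂ : α}
    (h₀ : ∀ i, 0 ≤ f i) (h : ∀ i, f i ≤ g i) (hf : HasProd f a₁) (hg : HasProd g a₂) :
    a₁ ≤ a₂ :=
  le_of_tendsto_of_tendsto' hf hg fun _ ↦ Finset.prod_le_prod (fun i _ ↦ h₀ i) fun i _ ↦ h i

theorem summable_primes_inv_pow {k : ℕ} (hk : 2 ≤ k) :
    Summable fun p : Nat.Primes ↦ ((p : ℝ) ^ k)⁻¹ :=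
  (Real.summable_nat_pow_inv.mpr hk).subtype _

theorem zetaNat_eq_tsum_inv_pow {k : ℕ} (hk : 2 ≤ k) :
    zetaNat k = ∑' m : ℕ, ((m : ℝ) ^ k)⁻¹ := by
  rw [(Real.summable_nat_pow_inv.mpr hk).tsum_eq_zero_add, zetaNat]
  simp [zero_pow (by omega : k ≠ 0)]

theorem zetaNat_pos {k : ℕ} (hk : 2 ≤ k) : 0 < zetaNat k := by
  have hs : Summable fun m : ℕ ↦ 1 / (m + 1 : ℝ) ^ k := by
    simpa using (summable_nat_add_iff 1).mpr (Real.summable_nat_pow_inv.mpr hk)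
  exact hs.tsum_pos (fun _ ↦ by positivity) 0 (by simp)

theorem hasProd_primes_one_sub_inv_pow {k : ℕ} (hk : 2 ≤ k) :
    HasProd (fun p : Nat.Primes ↦ 1 - ((p : ℝ) ^ k)⁻¹) (zetaNat k)⁻¹ := by
  let χ : ℕ →*₀ ℝ :=
    invMonoidWithZeroHom.comp <|
      (powMonoidWithZeroHom (by omega : k ≠ 0)).comp (Nat.castRingHom ℝ).toMonoidWithZeroHom
  have hχ (m : ℕ) : χ m = ((m : ℝ) ^ k)⁻¹ := rfl
  have hsum : Summable (‖χ ·‖) := by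
    simpa [hχ] using Real.summable_nat_pow_inv.mpr hk
  have hζ : ∑' m, χ m = zetaNat k := by simp only [hχ, zetaNat_eq_tsum_inv_pow hk]
  have hEuler := EulerProduct.eulerProduct_completely_multiplicative_hasProd hsum
  rw [hζ] at hEuler
  simpa [hχ] using hEuler.inv₀ (zetaNat_pos hk).ne'

noncomputable def thetaQuotientFactor (n : ℕ) (q : ℝ) : ℝ :=
  1 - (q ^ (n - 1) * (q ^ 2 - q + 1))⁻¹

theorem one_add_div_pow_sub_pow_eq {n : ℕ} (hn : 1 ≤ n) {q : ℝ} (hq₀ : q ≠ 0) (hq₁ : q ≠ 1) :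
    1 + (q ^ (n - 1) - 1) / (q ^ (n + 1) - q ^ n) =
      (1 + 1 / (q ^ 2 - q)) * thetaQuotientFactor n q := by
  obtain ⟨m, rfl⟩ : ∃ m, n = m + 1 := ⟨n - 1, by omega⟩
  have hq₁' : q - 1 ≠ 0 := sub_ne_zero.mpr hq₁
  have hq₂ : q ^ 2 - q ≠ 0 := by rw [sq, ← mul_sub_one]; exact mul_ne_zero hq₀ hq₁'
  have hquad : q ^ 2 - q + 1 ≠ 0 := by nlinarith [sq_nonneg (2 * q - 1)]
  have hden : q ^ (m + 1 + 1) - q ^ (m + 1) ≠ 0 := by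
    rw [show q ^ (m + 1 + 1) - q ^ (m + 1) = q ^ (m + 1) * (q - 1) by ring]
    exact mul_ne_zero (pow_ne_zero _ hq₀) hq₁'
  rw [thetaQuotientFactor, Nat.add_sub_cancel, one_add_div hden, one_add_div hq₂, inv_eq_one_div,
    one_sub_div (mul_ne_zero (pow_ne_zero _ hq₀) hquad), div_mul_div_comm,
    div_eq_div_iff hden (mul_ne_zero hq₂ (mul_ne_zero (pow_ne_zero _ hq₀) hquad))]
  ring

theorem one_sub_inv_pow_le_thetaQuotientFactor {n : ℕ} (hn : 1 ≤ n) {q : ℝ} (hq : 0 < q) :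
    1 - (q ^ n)⁻¹ ≤ thetaQuotientFactor n q := by
  obtain ⟨m, rfl⟩ : ∃ m, n = m + 1 := ⟨n - 1, by omega⟩
  rw [thetaQuotientFactor, Nat.add_sub_cancel, pow_succ]
  gcongr
  nlinarith [sq_nonneg (q - 1)]

theorem thetaQuotientFactor_le_one_sub_inv_pow {n : ℕ} (hn : 1 ≤ n) {q : ℝ} (hq : 1 ≤ q) :
    thetaQuotientFactor n q ≤ 1 - (q ^ (n + 1))⁻¹ := by
  obtain ⟨m, rfl⟩ : ∃ m, n = m + 1 := ⟨n - 1, by omega⟩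
  have hquad : 0 < q ^ 2 - q + 1 := by nlinarith [sq_nonneg (2 * q - 1)]
  rw [thetaQuotientFactor, Nat.add_sub_cancel, show q ^ (m + 1 + 1) = q ^ m * q ^ 2 by ring]
  gcongr
  linarith

theorem multipliable_primes_one_add_one_div_sq_sub :
    Multipliable fun p : Nat.Primes ↦ 1 + 1 / ((p : ℝ) ^ 2 - p) := by
  refine Real.multipliable_one_add_of_summable <|
    (summable_primes_inv_pow le_rfl).mul_left 2 |>.of_nonneg_of_le (fun p ↦ ?_) fun p ↦ ?_
  all_goals
    have hp : (2 : ℝ) ≤ p := mod_cast p.2.two_le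
    have hpos : 0 < (p : ℝ) ^ 2 - p := by nlinarith
  · positivity
  · rw [one_div, ← div_eq_mul_inv, le_div_iff₀ (by positivity), ← div_eq_inv_mul,
      div_le_iff₀ hpos]
    nlinarith

theorem multipliable_primes_thetaQuotientFactor {n : ℕ} (hn : 2 ≤ n) :
    Multipliable fun p : Nat.Primes ↦ thetaQuotientFactor n p := by
  have hsum : Summable fun p : Nat.Primes ↦ thetaQuotientFactor n p - 1 := by
    refine (summable_primes_inv_pow hn).of_norm_bounded fun p ↦ ?_
    have hp : (1 : ℝ) ≤ p := mod_cast p.2.one_lt.le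
    have hlow :=
      one_sub_inv_pow_le_thetaQuotientFactor (by omega : 1 ≤ n) (by linarith : (0 : ℝ) < p)
    have hup := thetaQuotientFactor_le_one_sub_inv_pow (by omega : 1 ≤ n) hp
    have : (0 : ℝ) ≤ ((p : ℝ) ^ (n + 1))⁻¹ := by positivity
    rw [Real.norm_eq_abs, abs_le]
    constructor <;> linarith
  simpa using Real.multipliable_one_add_of_summable hsum

theorem thetaN_between (n : ℕ) (hn : 2 ≤ n) :
    theta / zetaNat n ≤ thetaN n ∧ thetaN n ≤ theta / zetaNat (n + 1) := by
  have hp (p : Nat.Primes) : (2 : ℝ) ≤ p := mod_cast p.2.two_le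
  have hθ : HasProd (fun p : Nat.Primes ↦ 1 + 1 / ((p : ℝ) ^ 2 - p)) theta :=
    multipliable_primes_one_add_one_div_sq_sub.hasProd
  have hR := (multipliable_primes_thetaQuotientFactor hn).hasProd
  have hsplit : thetaN n = theta * ∏' p : Nat.Primes, thetaQuotientFactor n p := by
    rw [thetaN, ← (hθ.mul hR).tprod_eq]
    congr with p
    exact one_add_div_pow_sub_pow_eq (by omega) (by linarith [hp p]) (by linarith [hp p])
  have hθ₀ : 0 ≤ theta := hθ.nonneg fun p ↦ by
    have : (0 : ℝ) ≤ (p : ℝ) ^ 2 - p := by nlinarith [hp p]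
    positivity
  have hnonneg (p : Nat.Primes) : 0 ≤ 1 - ((p : ℝ) ^ n)⁻¹ :=
    sub_nonneg.mpr (inv_le_one_of_one_le₀ (one_le_pow₀ (by linarith [hp p])))
  have hlow (p : Nat.Primes) : 1 - ((p : ℝ) ^ n)⁻¹ ≤ thetaQuotientFactor n p :=
    one_sub_inv_pow_le_thetaQuotientFactor (by omega) (by linarith [hp p])
  have hup (p : Nat.Primes) : thetaQuotientFactor n p ≤ 1 - ((p : ℝ) ^ (n + 1))⁻¹ :=
    thetaQuotientFactor_le_one_sub_inv_pow (by omega) (by linarith [hp p])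
  rw [div_eq_mul_inv, div_eq_mul_inv, hsplit]
  exact ⟨mul_le_mul_of_nonneg_left
      (hasProd_le_of_nonneg hnonneg hlow (hasProd_primes_one_sub_inv_pow hn) hR) hθ₀,
    mul_le_mul_of_nonneg_left (hasProd_le_of_nonneg (fun p ↦ (hnonneg p).trans (hlow p)) hup
      hR (hasProd_primes_one_sub_inv_pow (by omega))) hθ₀⟩
end

section
/- (Paz–Schnorr characterization of co-cyclic lattices.) Let n and q be positive integers and let L be a subgroup of ℤ^n with [ℤ^n : L] = q. Then the quotient group ℤ^n/L is cyclic if and only if there exists a vector a = (a_1, …, a_n) ∈ ℤ^n primitive modulo q such that L = L_n(q, a) = {x ∈ ℤ^n : a_1x_1 + ⋯ + a_nx_n ≡ 0 (mod q)}. -/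
/-- The lattice `L_n(q, a) = {x ∈ ℤ^n : a₁x₁ + ⋯ + aₙxₙ ≡ 0 (mod q)}`. -/
def Lnq (n q : ℕ) (a : Fin n → ℤ) : AddSubgroup (Fin n → ℤ) where
  carrier := {x | (q : ℤ) ∣ ∑ i, a i * x i}
  zero_mem' := by simp
  add_mem' := by
    intro x y hx hy
    show (q : ℤ) ∣ ∑ i, a i * (x + y) i
    have h : ∑ i, a i * (x + y) i = (∑ i, a i * x i) + ∑ i, a i * y i := by
      rw [← Finset.sum_add_distrib]
      exact Finset.sum_congr rfl fun i _ => by simp [mul_add]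
    rw [h]
    exact dvd_add hx hy
  neg_mem' := by
    intro x hx
    show (q : ℤ) ∣ ∑ i, a i * (-x) i
    have h : ∑ i, a i * (-x) i = -∑ i, a i * x i := by
      rw [← Finset.sum_neg_distrib]
      exact Finset.sum_congr rfl fun i _ => by simp [mul_neg]
    rw [h]
    exact hx.neg_right

/-! A subgroup `L` of index `q` has cyclic quotient exactly when it is the kernel of a surjection
onto `ZMod q` (for `q = 0` this is `ℤ`, covering infinite index). A homomorphism `ℤ^n → ZMod q`
is determined by the images `aᵢ` of the unit vectors, so it is `x ↦ a ⬝ᵥ x mod q`; its kernel is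
`L_n(q, a)`, and by Bézout it hits `1` exactly when `gcd(a₁, …, aₙ, q) = 1`. -/

open Finset

section QuotientCyclic

variable {G : Type*} [AddGroup G] (L : AddSubgroup G) [L.Normal] {q : ℕ}

theorem isAddCyclic_quotient_iff_exists_ker_eq (hL : L.index = q) :
    IsAddCyclic (G ⧸ L) ↔ ∃ f : G →+ ZMod q, Function.Surjective f ∧ f.ker = L := by
  constructor
  · intro h
    have e : ZMod q ≃+ G ⧸ L := hL ▸ zmodAddCyclicAddEquiv h
    refine ⟨(e.symm : G ⧸ L →+ ZMod q).comp (QuotientAddGroup.mk' L),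
      e.symm.surjective.comp (QuotientAddGroup.mk'_surjective L), ?_⟩
    rw [AddMonoidHom.ker_addEquiv_comp, QuotientAddGroup.ker_mk']
  · rintro ⟨f, hf, rfl⟩
    let e := QuotientAddGroup.quotientKerEquivOfSurjective f hf
    exact isAddCyclic_of_surjective e.symm e.symm.surjective

end QuotientCyclic

section DotProductMod

variable {ι : Type*} [Fintype ι] (q : ℕ)

def dotProductMod (a : ι → ℤ) : (ι → ℤ) →+ ZMod q :=
  (Int.castAddHom (ZMod q)).comp (AddMonoidHom.mk' (a ⬝ᵥ ·) (dotProduct_add a))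

@[simp]
theorem dotProductMod_apply (a x : ι → ℤ) : dotProductMod q a x = ((a ⬝ᵥ x : ℤ) : ZMod q) :=
  rfl

theorem exists_eq_dotProductMod [DecidableEq ι] (f : (ι → ℤ) →+ ZMod q) :
    ∃ a : ι → ℤ, f = dotProductMod q a := by
  choose a ha using fun i => ZMod.intCast_surjective (f (Pi.single i 1))
  refine ⟨a, AddMonoidHom.functions_ext _ _ _ fun i x => ?_⟩
  have hx : (Pi.single i x : ι → ℤ) = x • Pi.single i 1 := by
    rw [← Pi.single_smul', smul_eq_mul, mul_one]
  rw [hx, map_zsmul, map_zsmul, ← ha i]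
  simp [dotProduct_single]

theorem dotProductMod_surjective_iff (a : ι → ℤ) :
    Function.Surjective (dotProductMod q a) ↔ IsCoprime (univ.gcd a) (q : ℤ) := by
  constructor
  · intro hf
    obtain ⟨x, hx⟩ := hf 1
    obtain ⟨k, hk⟩ : (q : ℤ) ∣ 1 - a ⬝ᵥ x := by
      rwa [dotProductMod_apply, ← Int.cast_one, ZMod.intCast_eq_intCast_iff_dvd_sub] at hx
    obtain ⟨c, hc⟩ : univ.gcd a ∣ a ⬝ᵥ x := dvd_sum fun i _ => (gcd_dvd (mem_univ i)).mul_right _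
    exact ⟨c, k, by linear_combination -hc - hk⟩
  · rintro ⟨u, v, huv⟩ z
    obtain ⟨b, hb : univ.gcd a = a ⬝ᵥ b⟩ := univ.gcd_eq_sum_mul a
    obtain ⟨z, rfl⟩ := ZMod.intCast_surjective z
    refine ⟨(z * u) • b, ?_⟩
    have hz : a ⬝ᵥ (z * u) • b = z - z * v * q := by
      rw [dotProduct_smul, smul_eq_mul]
      linear_combination (z * u) * hb.symm + z * huv
    rw [dotProductMod_apply, hz]
    simp

end DotProductMod

theorem ker_dotProductMod (n q : ℕ) (a : Fin n → ℤ) : (dotProductMod q a).ker = Lnq n q a := by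
  ext x
  exact ZMod.intCast_zmod_eq_zero_iff_dvd _ _

theorem cocyclic_iff_congruence_lattice_general (n q : ℕ)
    (L : AddSubgroup (Fin n → ℤ)) (hL : L.index = q) :
    IsAddCyclic ((Fin n → ℤ) ⧸ L) ↔
      ∃ a : Fin n → ℤ, Int.gcd (Finset.univ.gcd a) (q : ℤ) = 1 ∧ L = Lnq n q a := by
  simp_rw [isAddCyclic_quotient_iff_exists_ker_eq L hL, ← Int.isCoprime_iff_gcd_eq_one,
    ← dotProductMod_surjective_iff]
  constructor
  · rintro ⟨f, hf, rfl⟩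
    obtain ⟨a, rfl⟩ := exists_eq_dotProductMod q f
    exact ⟨a, hf, ker_dotProductMod n q a⟩
  · rintro ⟨a, ha, rfl⟩
    exact ⟨dotProductMod q a, ha, ker_dotProductMod n q a⟩

/-- Paz–Schnorr characterization of co-cyclic lattices: a subgroup `L ⊆ ℤ^n` of index `q`
has cyclic quotient `ℤ^n/L` iff `L = L_n(q, a)` for some vector `a` primitive modulo `q`. -/
theorem cocyclic_iff_congruence_lattice (n q : ℕ) (hn : 0 < n) (hq : 0 < q)
    (L : AddSubgroup (Fin n → ℤ)) (hL : L.index = q) :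
    IsAddCyclic ((Fin n → ℤ) ⧸ L) ↔
      ∃ a : Fin n → ℤ, Int.gcd (Finset.univ.gcd a) (q : ℤ) = 1 ∧ L = Lnq n q a :=
  cocyclic_iff_congruence_lattice_general n q L hL
end

section
/- Let n and q be positive integers and let a, b ∈ ℤ^n both be primitive modulo q. Then L_n(q, a) = L_n(q, b) if and only if there exists an integer λ with gcd(λ, q) = 1 such that b ≡ λ·a (mod q) coordinatewise. -/
lemma exists_sum_gcd {ι : Type*} [DecidableEq ι] (s : Finset ι) (f : ι → ℤ) :
    ∃ c : ι → ℤ, ∑ i ∈ s, c i * f i = s.gcd f := by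
  induction s using Finset.induction with
  | empty => exact ⟨0, by simp⟩
  | @insert a s hi ih =>
    obtain ⟨c, hc⟩ := ih
    refine ⟨fun j => if j = a then Int.gcdA (f a) (s.gcd f)
      else Int.gcdB (f a) (s.gcd f) * c j, ?_⟩
    rw [Finset.sum_insert hi, Finset.gcd_insert, ← Int.coe_gcd, Int.gcd_eq_gcd_ab]
    simp only [if_pos rfl, if_true]
    have : ∑ j ∈ s, (if j = a then Int.gcdA (f a) (s.gcd f)
        else Int.gcdB (f a) (s.gcd f) * c j) * f j
        = Int.gcdB (f a) (s.gcd f) * ∑ j ∈ s, c j * f j := by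
      rw [Finset.mul_sum]
      refine Finset.sum_congr rfl fun j hj => ?_
      rw [if_neg (by rintro rfl; exact hi hj)]
      ring
    rw [this, hc]
    ring

lemma exists_inv_comb {n q : ℕ} (a : Fin n → ℤ)
    (ha : Int.gcd (Finset.univ.gcd a) (q : ℤ) = 1) :
    ∃ e : Fin n → ℤ, (q : ℤ) ∣ (∑ i, a i * e i) - 1 := by
  obtain ⟨c, hc⟩ := exists_sum_gcd Finset.univ a
  obtain ⟨u, v, huv⟩ := Int.isCoprime_iff_gcd_eq_one.mpr ha
  refine ⟨fun i => u * c i, ⟨-v, ?_⟩⟩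
  have : ∑ i, a i * (u * c i) = u * ∑ i, c i * a i := by
    rw [Finset.mul_sum]; exact Finset.sum_congr rfl fun i _ => by ring
  rw [this, hc]
  linear_combination huv

lemma mem_Lnq_iff {n q : ℕ} (a : Fin n → ℤ) (x : Fin n → ℤ) :
    x ∈ Lnq n q a ↔ (q : ℤ) ∣ ∑ i, a i * x i := Iff.rfl

/-- Two primitive vectors modulo `q` define the same congruence lattice iff they are
equivalent modulo `q`, i.e. proportional by a scalar coprime to `q`. -/
theorem Lnq_eq_iff_equiv (n q : ℕ) (hn : 0 < n) (hq : 0 < q) (a b : Fin n → ℤ)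
    (ha : Int.gcd (Finset.univ.gcd a) (q : ℤ) = 1)
    (hb : Int.gcd (Finset.univ.gcd b) (q : ℤ) = 1) :
    Lnq n q a = Lnq n q b ↔
      ∃ lam : ℤ, Int.gcd lam (q : ℤ) = 1 ∧ ∀ i, b i ≡ lam * a i [ZMOD (q : ℤ)] := by
  constructor
  · intro hL
    obtain ⟨e, he⟩ := exists_inv_comb a ha
    obtain ⟨e', he'⟩ := exists_inv_comb b hb
    set lam := ∑ i, b i * e i with hlam
    -- Main claim
    have key : ∀ x : Fin n → ℤ, (q : ℤ) ∣ (∑ i, b i * x i) - lam * ∑ i, a i * x i := by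
      intro x
      set t := ∑ i, a i * x i with ht
      set z : Fin n → ℤ := fun i => x i - t * e i with hz
      have haz : ∑ i, a i * z i = t - t * ∑ i, a i * e i := by
        simp only [hz]
        rw [Finset.mul_sum, ← Finset.sum_sub_distrib, ht]
        exact Finset.sum_congr rfl fun i _ => by ring
      have hzmem : z ∈ Lnq n q a := by
        rw [mem_Lnq_iff, haz]
        have : t - t * ∑ i, a i * e i = -t * ((∑ i, a i * e i) - 1) := by ring
        rw [this]
        exact Dvd.dvd.mul_left he _
      rw [hL, mem_Lnq_iff] at hzmem
      have hbz : ∑ i, b i * z i = (∑ i, b i * x i) - t * lam := by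
        simp only [hz, hlam]
        rw [Finset.mul_sum, ← Finset.sum_sub_distrib]
        exact Finset.sum_congr rfl fun i _ => by ring
      rw [hbz] at hzmem
      have : (∑ i, b i * x i) - lam * t = (∑ i, b i * x i) - t * lam := by ring
      rw [ht] at this ⊢
      rw [this]
      exact hzmem
    refine ⟨lam, ?_, ?_⟩
    · -- coprimality of lam
      have h1 := key e'
      have h2 : (q : ℤ) ∣ lam * (∑ i, a i * e' i) - 1 := by
        have := dvd_sub he' h1
        have heq : (∑ i, b i * e' i) - 1 - ((∑ i, b i * e' i) - lam * ∑ i, a i * e' i)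
            = lam * (∑ i, a i * e' i) - 1 := by ring
        rwa [heq] at this
      obtain ⟨k, hk⟩ := h2
      refine Int.isCoprime_iff_gcd_eq_one.mp ⟨∑ i, a i * e' i, -k, by linear_combination hk⟩
    · intro i
      have h := key (Pi.single i 1 : Fin n → ℤ)
      have hb' : ∑ j, b j * (Pi.single i 1 : Fin n → ℤ) j = b i := by
        simp [Pi.single_apply, mul_ite, Finset.sum_ite_eq']
      have ha' : ∑ j, a j * (Pi.single i 1 : Fin n → ℤ) j = a i := by
        simp [Pi.single_apply, mul_ite, Finset.sum_ite_eq']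
      rw [hb', ha'] at h
      exact (Int.modEq_iff_dvd.mpr h).symm
  · rintro ⟨lam, hcop, hmod⟩
    have hkey : ∀ x : Fin n → ℤ, (q : ℤ) ∣ (∑ i, b i * x i) - lam * ∑ i, a i * x i := by
      intro x
      have heq : (∑ i, b i * x i) - lam * ∑ i, a i * x i
          = ∑ i, (b i - lam * a i) * x i := by
        rw [Finset.mul_sum, ← Finset.sum_sub_distrib]
        exact Finset.sum_congr rfl fun i _ => by ring
      rw [heq]
      refine Finset.dvd_sum fun i _ => Dvd.dvd.mul_right ?_ _
      have := Int.modEq_iff_dvd.mp (hmod i)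
      have heq2 : lam * a i - b i = -(b i - lam * a i) := by ring
      rw [heq2] at this
      exact (dvd_neg.mp this)
    have hcop' : IsCoprime (q : ℤ) lam := (Int.isCoprime_iff_gcd_eq_one.mpr hcop).symm
    ext x
    rw [mem_Lnq_iff, mem_Lnq_iff]
    constructor
    · intro hx
      have := dvd_add (hkey x) (Dvd.dvd.mul_left hx lam)
      simpa using this
    · intro hx
      have h2 : (q : ℤ) ∣ lam * ∑ i, a i * x i := by
        have := dvd_sub hx (hkey x)
        simpa using this
      exact hcop'.dvd_of_dvd_mul_left h2
end

section
/- Fix a positive integer d. Then as x → ∞, the number of positive integers k ≤ x that are squarefree and coprime to d is asymptotically (6/π²) · x · ∏_{p | d} (1 + 1/p)^{−1}; that is, the limit as x → ∞ of (1/x)·#{k ≤ x : k squarefree, gcd(k, d) = 1} equals (6/π²)·∏_{p | d} p/(p+1), the product being over the primes p dividing d. -/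
/-!
Writing the indicator of a squarefree `k` as `∑_{e² ∣ k} μ(e)` and putting `k = e² j`, the number of
squarefree `k ≤ x` coprime to `d` is `∑_{(e, d) = 1} μ(e) C(x / e²)`, where `C(y)` counts the
`j ≤ y` coprime to `d`. Coprimality to `d` is `d`-periodic, so `C(y) / y → φ(d) / d`, and
`C(y) ≤ y` bounds the `e`-th term of the normalized sum by `1 / e²`; Tannery's theorem then gives
the density `φ(d) / d · ∑_{(e, d) = 1} μ(e) / e²`. That series is `1 / L(χ₀, 2)` for the trivial
character `χ₀` mod `d`, that is `ζ(2)⁻¹ ∏_{p ∣ d} (1 - p⁻²)⁻¹`, while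
`φ(d) / d = ∏_{p ∣ d} (1 - p⁻¹)`.
-/

open Filter Finset ArithmeticFunction Function
open scoped ArithmeticFunction.Moebius Nat Topology

namespace Nat

variable {p : ℕ → Prop} [DecidablePred p] {a : ℕ}

lemma count_mul_add_of_periodic (hp : Periodic p a) (q r : ℕ) :
    count p (a * q + r) = q * count p a + count p r := by
  induction q with
  | zero => simp
  | succ q ih =>
    have hshift : (fun k => p (a + k)) = p := funext fun k => by rw [add_comm, hp k]
    rw [mul_add_one, add_comm (a * q), add_assoc, count_add]
    simp only [hshift, ih]
    ring

lemma abs_count_sub_le_of_periodic (hp : Periodic p a) (ha : 0 < a) (n : ℕ) :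
    |(count p n : ℝ) - n * (count p a / a)| ≤ a := by
  have hdecomp : (count p n : ℝ) - n * (count p a / a) =
      count p (n % a) - (n % a : ℕ) * (count p a / a) := by
    conv_lhs => rw [← Nat.div_add_mod n a, count_mul_add_of_periodic hp]
    push_cast
    field_simp
    ring
  have hr : n % a < a := Nat.mod_lt n ha
  have hca : count p a ≤ a := count_le p
  rw [hdecomp]
  refine abs_sub_le_of_nonneg_of_le (by positivity) ?_ (by positivity) ?_
  · exact_mod_cast (count_le p (n := n % a)).trans hr.le
  · calc ((n % a : ℕ) : ℝ) * (count p a / a) ≤ (n % a : ℕ) * 1 := by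
          gcongr
          rw [div_le_one (by exact_mod_cast ha)]
          exact_mod_cast hca
      _ ≤ a := by rw [mul_one]; exact_mod_cast hr.le

theorem tendsto_count_div_of_periodic (hp : Periodic p a) (ha : 0 < a) :
    Tendsto (fun n : ℕ => (count p n : ℝ) / n) atTop (𝓝 (count p a / a)) := by
  rw [← tendsto_sub_nhds_zero_iff]
  refine squeeze_zero_norm' ?_ (tendsto_const_div_atTop_nhds_zero_nat (a : ℝ))
  filter_upwards [eventually_gt_atTop 0] with n hn
  have hn' : (0 : ℝ) < n := by exact_mod_cast hn
  rw [Real.norm_eq_abs, div_sub' hn'.ne', abs_div, abs_of_pos hn']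
  gcongr
  simpa [mul_comm] using abs_count_sub_le_of_periodic hp ha n

lemma card_filter_Ioc_eq_count (p : ℕ → Prop) [DecidablePred p] (n : ℕ) :
    #{k ∈ Ioc 0 n | p k} = count (fun j => p (j + 1)) n := by
  induction n with
  | zero => simp
  | succ n ih =>
    rw [← insert_Ioc_right_eq_Ioc_add_one n.zero_le, filter_insert, count_succ, ← ih]
    split_ifs with h
    · rw [card_insert_of_notMem (by simp)]
    · rfl

theorem tendsto_card_filter_Ioc_div_of_periodic (hp : Periodic p a) (ha : 0 < a) :
    Tendsto (fun n : ℕ => (#{k ∈ Ioc 0 n | p k} : ℝ) / n) atTop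
      (𝓝 (#{k ∈ Ioc 0 a | p k} / a)) := by
  simp only [card_filter_Ioc_eq_count]
  exact tendsto_count_div_of_periodic (fun j => by rw [add_right_comm, hp]) ha

lemma card_filter_Ioc_coprime_eq_totient (d : ℕ) : #{k ∈ Ioc 0 d | k.Coprime d} = φ d := by
  rw [← filter_coprime_Ico_eq_totient d 1]
  congr 1
  ext k
  simp only [mem_filter, mem_Ioc, mem_Ico, Nat.coprime_comm]
  omega

end Nat

lemma tendsto_natFloor_div_of_tendsto {u : ℕ → ℝ} {L : ℝ}
    (h : Tendsto (fun n : ℕ => u n / n) atTop (𝓝 L)) :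
    Tendsto (fun x : ℝ => u ⌊x⌋₊ / x) atTop (𝓝 L) := by
  have := (h.comp tendsto_nat_floor_atTop).mul tendsto_nat_floor_div_atTop
  rw [mul_one] at this
  refine this.congr' ?_
  filter_upwards [eventually_ge_atTop 1] with x hx
  have : (⌊x⌋₊ : ℝ) ≠ 0 := by exact_mod_cast (Nat.floor_pos.mpr hx).ne'
  simp only [comp_apply, div_mul_div_cancel₀ this]

lemma tendsto_card_coprime_div {d : ℕ} (hd : 0 < d) :
    Tendsto (fun x : ℝ => (#{j ∈ Ioc 0 ⌊x⌋₊ | j.Coprime d} : ℝ) / x) atTop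
      (𝓝 (φ d / d)) := by
  have := Nat.tendsto_card_filter_Ioc_div_of_periodic (p := (·.Coprime d))
    (fun j => by simp [Nat.coprime_comm, Nat.periodic_coprime d j]) hd
  rw [Nat.card_filter_Ioc_coprime_eq_totient] at this
  exact tendsto_natFloor_div_of_tendsto this

lemma dvd_of_sq_dvd_sq_mul_squarefree {a b e : ℕ} (ha : Squarefree a) (hb : b ≠ 0)
    (h : e ^ 2 ∣ b ^ 2 * a) : e ∣ b := by
  have he : e ≠ 0 := by rintro rfl; simp [ha.ne_zero, hb] at h
  rw [← Nat.factorization_le_iff_dvd he hb]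
  intro p
  have hp := (Nat.factorization_le_iff_dvd (by positivity) (by simp [hb, ha.ne_zero])).mpr h p
  simp only [Nat.factorization_mul (pow_ne_zero 2 hb) ha.ne_zero, Nat.factorization_pow,
    Finsupp.add_apply, Finsupp.smul_apply, smul_eq_mul] at hp
  have := ha.natFactorization_le_one p
  omega

lemma sum_divisors_filter_sq_dvd_moebius {k : ℕ} (hk : k ≠ 0) :
    ∑ e ∈ k.divisors with e ^ 2 ∣ k, μ e = if Squarefree k then 1 else 0 := by
  obtain ⟨a, b, ha0, hb0, rfl, ha⟩ := Nat.sq_mul_squarefree_of_pos (Nat.pos_of_ne_zero hk)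
  have hdiv : {e ∈ (b ^ 2 * a).divisors | e ^ 2 ∣ b ^ 2 * a} = b.divisors := by
    ext e
    simp only [mem_filter, Nat.mem_divisors]
    constructor
    · rintro ⟨-, he⟩
      exact ⟨dvd_of_sq_dvd_sq_mul_squarefree ha hb0.ne' he, hb0.ne'⟩
    · rintro ⟨he, -⟩
      have he2 : e ^ 2 ∣ b ^ 2 * a := (pow_dvd_pow_of_dvd he 2).mul_right a
      exact ⟨⟨(dvd_pow_self e two_ne_zero).trans he2, hk⟩, he2⟩
  have hsum : ∑ e ∈ b.divisors, μ e = if b = 1 then 1 else 0 := by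
    simpa only [coe_mul_zeta_apply, one_apply] using congr($moebius_mul_coe_zeta b)
  rw [hdiv, hsum]
  refine if_congr ⟨?_, fun h => Nat.isUnit_iff.mp (h b ⟨a, by ring⟩)⟩ rfl rfl
  rintro rfl
  simpa using ha

lemma card_filter_dvd_Ioc (P : ℕ → Prop) [DecidablePred P] {m : ℕ} (hm : 0 < m) (N : ℕ) :
    #{k ∈ Ioc 0 N | m ∣ k ∧ P k} = #{j ∈ Ioc 0 (N / m) | P (m * j)} := by
  symm
  refine card_nbij' (m * ·) (· / m) ?_ ?_ ?_ ?_
  all_goals simp only [coe_filter, mem_Ioc]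
  · rintro j ⟨⟨hj, hjN⟩, hP⟩
    rw [Nat.le_div_iff_mul_le hm] at hjN
    exact ⟨⟨Nat.mul_pos hm hj, by linarith⟩, dvd_mul_right m j, hP⟩
  · rintro k ⟨⟨hk, hkN⟩, ⟨c, rfl⟩, hP⟩
    simp only [Set.mem_ofPred_eq, Nat.mul_div_cancel_left c hm, Nat.le_div_iff_mul_le hm]
    exact ⟨⟨Nat.pos_of_mul_pos_left hk, by linarith⟩, hP⟩
  · intro j _
    exact Nat.mul_div_cancel_left j hm
  · rintro k ⟨_, hk, _⟩
    exact Nat.mul_div_cancel' hk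

lemma card_filter_squarefree_eq_sum (P : ℕ → Prop) [DecidablePred P] (N : ℕ) :
    (#{k ∈ Ioc 0 N | Squarefree k ∧ P k} : ℤ) =
      ∑ e ∈ Ioc 0 N, μ e * #{k ∈ Ioc 0 N | e ^ 2 ∣ k ∧ P k} := by
  simp only [card_filter, Nat.cast_sum, Nat.cast_ite, Nat.cast_one, Nat.cast_zero, mul_sum,
    mul_boole]
  rw [sum_comm]
  refine sum_congr rfl fun k hk => ?_
  have hk0 : k ≠ 0 := (mem_Ioc.mp hk).1.ne'
  have hdiv : {e ∈ Ioc 0 N | e ^ 2 ∣ k} = {e ∈ k.divisors | e ^ 2 ∣ k} := by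
    ext e
    simp only [mem_filter, mem_Ioc, Nat.mem_divisors]
    constructor
    · rintro ⟨-, he⟩
      exact ⟨⟨(dvd_pow_self e two_ne_zero).trans he, hk0⟩, he⟩
    · rintro ⟨⟨he, -⟩, he2⟩
      exact ⟨⟨Nat.pos_of_dvd_of_pos he (Nat.pos_of_ne_zero hk0),
        (Nat.le_of_dvd (Nat.pos_of_ne_zero hk0) he).trans (mem_Ioc.mp hk).2⟩, he2⟩
  by_cases hP : P k
  · simp only [hP, and_true, ← sum_filter, hdiv, sum_divisors_filter_sq_dvd_moebius hk0]
  · simp [hP]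

lemma card_filter_Ioc_sq_dvd_coprime (d N : ℕ) {e : ℕ} (he : 0 < e) :
    #{k ∈ Ioc 0 N | e ^ 2 ∣ k ∧ k.Coprime d} =
      if e.Coprime d then #{j ∈ Ioc 0 (N / e ^ 2) | j.Coprime d} else 0 := by
  rw [card_filter_dvd_Ioc _ (by positivity)]
  simp only [Nat.coprime_mul_iff_left, Nat.coprime_pow_left_iff two_pos]
  by_cases h : e.Coprime d
  · simp only [eq_true h, true_and, if_true]
  · simp only [eq_false h, false_and, if_false, filter_false, card_empty]

-- The term `e = 0` vanishes because `N / 0 = 0`.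
lemma card_squarefree_coprime_eq_tsum (d N : ℕ) :
    (#{k ∈ Ioc 0 N | Squarefree k ∧ k.Coprime d} : ℝ) =
      ∑' e : ℕ, (if e.Coprime d then (μ e : ℝ) else 0) *
        #{j ∈ Ioc 0 (N / e ^ 2) | j.Coprime d} := by
  rw [tsum_eq_sum (s := Ioc 0 N), ← Int.cast_natCast, card_filter_squarefree_eq_sum]
  · push_cast
    refine sum_congr rfl fun e he => ?_
    rw [card_filter_Ioc_sq_dvd_coprime d N (mem_Ioc.mp he).1]
    split_ifs <;> simp
  · intro e he
    have hNe : N / e ^ 2 = 0 := by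
      rw [Nat.div_eq_zero_iff]
      rcases Nat.eq_zero_or_pos e with rfl | he0
      · simp
      · exact .inr <| (not_le.mp fun h => he (mem_Ioc.mpr ⟨he0, h⟩)).trans_le
          (Nat.le_self_pow two_ne_zero e)
    simp [hNe]

lemma DirichletCharacter.one_apply_natCast {d : ℕ} (n : ℕ) :
    (1 : DirichletCharacter ℂ d) n = if n.Coprime d then 1 else 0 := by
  split_ifs with h
  · exact MulChar.one_apply ((ZMod.isUnit_iff_coprime n d).mpr h)
  · exact MulChar.map_nonunit _ (by rwa [ZMod.isUnit_iff_coprime])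

lemma tsum_coprime_moebius_div_sq {d : ℕ} (hd : d ≠ 0) :
    ∑' e : ℕ, (if e.Coprime d then (μ e : ℝ) else 0) / e ^ 2 =
      6 / Real.pi ^ 2 / ∏ p ∈ d.primeFactors, (1 - ((p : ℝ) ^ 2)⁻¹) := by
  have : NeZero d := ⟨hd⟩
  have hs : 1 < (2 : ℂ).re := by norm_num
  have hinv := DirichletCharacter.LSeries.mul_mu_eq_one (1 : DirichletCharacter ℂ d) hs
  rw [← DirichletCharacter.LFunction_eq_LSeries _ hs, ← DirichletCharacter.LFunctionTrivChar,
    DirichletCharacter.LFunctionTrivChar_eq_mul_riemannZeta (by norm_num), riemannZeta_two] at hinv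
  apply Complex.ofReal_injective
  rw [Complex.ofReal_tsum]
  convert eq_inv_of_mul_eq_one_right hinv using 1
  · rw [LSeries]
    refine tsum_congr fun e => ?_
    rcases eq_or_ne e 0 with rfl | he
    · simp
    rw [LSeries.term_of_ne_zero he, Pi.mul_apply, DirichletCharacter.one_apply_natCast,
      Complex.cpow_ofNat]
    split_ifs <;> simp
  · push_cast
    simp only [Complex.cpow_neg, Complex.cpow_ofNat]
    rw [mul_inv, inv_div, div_eq_mul_inv (6 / _), mul_comm]

lemma tendsto_card_coprime_div_sq {d : ℕ} (hd : 0 < d) (e : ℕ) :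
    Tendsto (fun x : ℝ => (#{j ∈ Ioc 0 (⌊x⌋₊ / e ^ 2) | j.Coprime d} : ℝ) / x) atTop
      (𝓝 (φ d / d / e ^ 2)) := by
  rcases Nat.eq_zero_or_pos e with rfl | he
  · simp
  have he2 : (0 : ℝ) < e ^ 2 := by positivity
  refine (((tendsto_card_coprime_div hd).comp (tendsto_id.atTop_div_const he2)).div_const
    _).congr fun x => ?_
  rw [comp_apply, id, ← Nat.cast_pow, Nat.floor_div_natCast, Nat.cast_pow]
  field_simp

lemma card_coprime_div_le (d e : ℕ) {x : ℝ} (hx : 0 < x) :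
    (#{j ∈ Ioc 0 (⌊x⌋₊ / e ^ 2) | j.Coprime d} : ℝ) / x ≤ 1 / e ^ 2 := by
  rw [div_le_iff₀ hx]
  calc (#{j ∈ Ioc 0 (⌊x⌋₊ / e ^ 2) | j.Coprime d} : ℝ) ≤ (⌊x⌋₊ / e ^ 2 : ℕ) := by
        exact_mod_cast (card_filter_le _ _).trans (Nat.card_Ioc 0 _).le
    _ ≤ (⌊x⌋₊ : ℝ) / (e ^ 2 : ℕ) := Nat.cast_div_le
    _ ≤ x / e ^ 2 := by push_cast; gcongr; exact Nat.floor_le hx.le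
    _ = 1 / e ^ 2 * x := by ring

theorem tendsto_card_squarefree_coprime_div {d : ℕ} (hd : 0 < d) :
    Tendsto (fun x : ℝ => (#{k ∈ Ioc 0 ⌊x⌋₊ | Squarefree k ∧ k.Coprime d} : ℝ) / x) atTop
      (𝓝 (φ d / d * ∑' e : ℕ, (if e.Coprime d then (μ e : ℝ) else 0) / e ^ 2)) := by
  simp_rw [card_squarefree_coprime_eq_tsum, ← tsum_div_const, ← tsum_mul_left, mul_div_assoc]
  refine tendsto_tsum_of_dominated_convergence (bound := fun e : ℕ => 1 / (e : ℝ) ^ 2)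
    (Real.summable_one_div_nat_pow.mpr one_lt_two) (fun e => ?_) ?_
  · convert (tendsto_card_coprime_div_sq hd e).const_mul (if e.Coprime d then (μ e : ℝ) else 0)
      using 2
    ring
  · filter_upwards [eventually_gt_atTop 0] with x hx e
    have hμ : ‖(if e.Coprime d then (μ e : ℝ) else 0)‖ ≤ 1 := by
      split_ifs
      · rw [Real.norm_eq_abs]
        exact_mod_cast abs_moebius_le_one
      · simp
    rw [norm_mul, Real.norm_of_nonneg (div_nonneg (Nat.cast_nonneg _) hx.le)]
    exact (mul_le_of_le_one_left (by positivity) hμ).trans (card_coprime_div_le d e hx)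

lemma totient_div_eq_prod {d : ℕ} (hd : d ≠ 0) :
    (φ d : ℝ) / d = ∏ p ∈ d.primeFactors, (1 - (p : ℝ)⁻¹) := by
  have h := congr(($(Nat.totient_eq_mul_prod_factors d) : ℝ))
  push_cast at h
  rw [h]
  field_simp

lemma one_sub_inv_div_one_sub_inv_sq {p : ℝ} (hp : 1 < p) :
    (1 - p⁻¹) / (1 - (p ^ 2)⁻¹) = p / (p + 1) := by
  have : p ^ 2 - 1 ≠ 0 := by nlinarith
  have : p + 1 ≠ 0 := by linarith
  field_simp
  ring

/-- The density of squarefree integers coprime to a fixed `d` is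
`(6/π²) · ∏_{p ∣ d} (1 + 1/p)⁻¹ = (6/π²) · ∏_{p ∣ d} p/(p+1)`. -/
theorem squarefree_coprime_density (d : ℕ) (hd : 0 < d) :
    Tendsto (fun x : ℝ =>
        (Set.ncard {k : ℕ | 0 < k ∧ (k : ℝ) ≤ x ∧ Squarefree k ∧ Nat.Coprime k d} : ℝ) / x)
      atTop (nhds (6 / Real.pi ^ 2 * ∏ p ∈ d.primeFactors, (p : ℝ) / (p + 1))) := by
  have hset (x : ℝ) : {k : ℕ | 0 < k ∧ (k : ℝ) ≤ x ∧ Squarefree k ∧ Nat.Coprime k d} =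
      ↑({k ∈ Ioc 0 ⌊x⌋₊ | Squarefree k ∧ k.Coprime d} : Finset ℕ) := by
    ext k
    simp only [Set.mem_ofPred_eq, coe_filter, mem_Ioc, and_assoc]
    exact and_congr_right fun hk => and_congr_left' (Nat.le_floor_iff' hk.ne').symm
  have hlim : φ d / d * ∑' e : ℕ, (if e.Coprime d then (μ e : ℝ) else 0) / e ^ 2 =
      6 / Real.pi ^ 2 * ∏ p ∈ d.primeFactors, (p : ℝ) / (p + 1) := by
    rw [tsum_coprime_moebius_div_sq hd.ne', totient_div_eq_prod hd.ne', mul_div_left_comm,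
      ← prod_div_distrib]
    congr 1
    refine prod_congr rfl fun p hp => one_sub_inv_div_one_sub_inv_sq ?_
    exact_mod_cast (Nat.prime_of_mem_primeFactors hp).one_lt
  simp_rw [hset, Set.ncard_coe_finset, ← hlim]
  exact tendsto_card_squarefree_coprime_div hd
end

section
/- The product over all primes p of (1 + 1/(p² − p)) equals ζ(2)ζ(3)/ζ(6) = 315·ζ(3)/(2π⁴), where ζ is the Riemann zeta function. -/
theorem bernoulli'_five : bernoulli' 5 = 0 := by
  rw [bernoulli'_def]
  norm_num [Finset.sum_range_succ, Nat.choose]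

theorem bernoulli'_six : bernoulli' 6 = 1 / 42 := by
  rw [bernoulli'_def]
  norm_num [Finset.sum_range_succ, Nat.choose, bernoulli'_five]

theorem zetaNat_eq_of_hasSum {k : ℕ} (hk : k ≠ 0) {a : ℝ}
    (h : HasSum (fun n : ℕ ↦ 1 / (n : ℝ) ^ k) a) : zetaNat k = a := by
  have := (hasSum_nat_add_iff' 1).mpr h
  simpa [zetaNat, zero_pow hk] using this.tsum_eq

theorem zetaNat_two : zetaNat 2 = Real.pi ^ 2 / 6 :=
  zetaNat_eq_of_hasSum two_ne_zero hasSum_zeta_two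

theorem zetaNat_six : zetaNat 6 = Real.pi ^ 6 / 945 := by
  refine zetaNat_eq_of_hasSum (by norm_num) ?_
  convert hasSum_zeta_nat three_ne_zero using 1
  rw [bernoulli_eq_bernoulli'_of_ne_one (by norm_num), bernoulli'_six]
  norm_num [Nat.factorial]
  ring

theorem zetaNat_six_ne_zero : zetaNat 6 ≠ 0 := by
  rw [zetaNat_six]
  positivity

theorem hasProd_zetaNat {k : ℕ} (hk : 2 ≤ k) :
    HasProd (fun p : Nat.Primes ↦ (1 - ((p : ℝ) ^ k)⁻¹)⁻¹) (zetaNat k) := by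
  let f : ℕ →*₀ ℝ := invMonoidWithZeroHom.comp
    ((powMonoidWithZeroHom (by omega : k ≠ 0)).comp (Nat.castRingHom ℝ).toMonoidWithZeroHom)
  have hf : ∀ n : ℕ, f n = 1 / (n : ℝ) ^ k := fun n ↦ (one_div _).symm
  have hsum : Summable (fun n : ℕ ↦ 1 / (n : ℝ) ^ k) := Real.summable_one_div_nat_pow.mpr hk
  have hprod := EulerProduct.eulerProduct_completely_multiplicative_hasProd (f := f)
    (by simpa only [hf, norm_div, norm_one, norm_pow, RCLike.norm_natCast] using hsum)
  rw [zetaNat_eq_of_hasSum (by omega) hsum.hasSum]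
  simpa only [hf, one_div] using hprod

theorem one_add_one_div_sq_sub_self {K : Type*} [Field K] [LinearOrder K]
    [IsStrictOrderedRing K] {x : K} (hx : 1 < x) :
    1 + 1 / (x ^ 2 - x) = (1 - (x ^ 2)⁻¹)⁻¹ * (1 - (x ^ 3)⁻¹)⁻¹ / (1 - (x ^ 6)⁻¹)⁻¹ := by
  have h0 : x ≠ 0 := by positivity
  have h1 : x - 1 ≠ 0 := (sub_pos.2 hx).ne'
  have h2 : x ^ 2 - 1 ≠ 0 := (sub_pos.2 (one_lt_pow₀ hx two_ne_zero)).ne'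
  have h3 : x ^ 3 - 1 ≠ 0 := (sub_pos.2 (one_lt_pow₀ hx three_ne_zero)).ne'
  have h6 : x ^ 6 - 1 ≠ 0 := (sub_pos.2 (one_lt_pow₀ hx (by norm_num))).ne'
  field_simp
  ring

/-- `ϑ = ∏_p (1 + 1/(p² - p)) = ζ(2)ζ(3)/ζ(6) = 315ζ(3)/(2π⁴)`. -/
theorem theta_eq :
    (∏' p : Nat.Primes, (1 + 1 / ((p : ℝ) ^ 2 - p))) = zetaNat 2 * zetaNat 3 / zetaNat 6 ∧
      zetaNat 2 * zetaNat 3 / zetaNat 6 = 315 * zetaNat 3 / (2 * Real.pi ^ 4) := by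
  have hprod : HasProd (fun p : Nat.Primes ↦ 1 + 1 / ((p : ℝ) ^ 2 - p))
      (zetaNat 2 * zetaNat 3 / zetaNat 6) := by
    simp_rw [fun p : Nat.Primes ↦ one_add_one_div_sq_sub_self (K := ℝ) (x := p)
      (by exact_mod_cast p.2.one_lt)]
    exact ((hasProd_zetaNat (k := 2) le_rfl).mul (hasProd_zetaNat (k := 3) (by norm_num))).div₀
      (hasProd_zetaNat (k := 6) (by norm_num)) zetaNat_six_ne_zero
  refine ⟨hprod.tprod_eq, ?_⟩
  rw [zetaNat_two, zetaNat_six]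
  field_simp
  ring
end
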